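/- arXiv:1507.05859 — 6 statements merged into one kernel-verified Lean document; each statement's English description precedes it below -/
import Mathlib

section
/- Let k be a field of characteristic p, let U be a cyclic group of order p, and let W be a k[U]-module generated by a finite-dimensional k-subspace W' with dim_k(W') = dim_k(W^U). Then the kernel of the induced surjection η: k[U] ⊗_k W' → W is contained in the kernel of the augmentation map ε: k[U] ⊗_k W' → W', ū ⊗ w ↦ w. -/
/-!
Let `ρ` be the `k`-linear representation underlying `W`. Since `U` is finite cyclic with generator
`σ`, the invariants and the coinvariants of `W` are the kernel and the cokernel of `ρ σ - 1`, so
for finite-dimensional `W` they have the same dimension. Since `a ∈ k[U]` acts on the coinvariants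
`W_U` through its augmentation and `W'` generates `W`, the map `W' → W_U` is onto, hence by the
dimension hypothesis an isomorphism. Finally the composite `k[U] ⊗ W' → W → W_U` equals
`k[U] ⊗ W' → W' → W_U`, so `ker η ⊆ ker ε`.
-/

open TensorProduct

/-- The `k`-submodule of `U`-invariants of a module over the group algebra `k[U]`. -/
def fixedPts (k U W : Type*) [Field k] [Group U] [AddCommGroup W]
    [Module (MonoidAlgebra k U) W] [Module k W]
    [IsScalarTower k (MonoidAlgebra k U) W] : Submodule k W where
  carrier := {x | ∀ u : U, MonoidAlgebra.of k U u • x = x}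
  add_mem' := by
    intro a b ha hb u
    rw [smul_add, ha u, hb u]
  zero_mem' := by
    intro u
    exact smul_zero _
  smul_mem' := by
    intro c x hx u
    have h1 : (c • x : W) = (algebraMap k (MonoidAlgebra k U) c) • x :=
      (algebraMap_smul (MonoidAlgebra k U) c x).symm
    rw [h1, smul_smul, ← Algebra.commutes c (MonoidAlgebra.of k U u), ← smul_smul, hx u, ← h1]

theorem Module.Finite.of_span_eq_top_of_submodule {k A W : Type*} [CommSemiring k] [Semiring A]
    [Algebra k A] [Module.Finite k A] [AddCommMonoid W] [Module A W] [Module k W]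
    [IsScalarTower k A W] (W' : Submodule k W) [Module.Finite k W']
    (hgen : Submodule.span A (W' : Set W) = ⊤) :
    Module.Finite k W := by
  obtain ⟨s, hs⟩ := Module.Finite.iff_fg.1 (inferInstance : Module.Finite k W')
  have : Module.Finite A W := ⟨⟨s, by rw [← Submodule.span_span_of_tower k, hs, hgen]⟩⟩
  exact Module.Finite.trans A W

namespace Representation

theorem invariants_ofModule' {k G W : Type*} [Field k] [Group G] [AddCommGroup W]
    [Module (MonoidAlgebra k G) W] [Module k W] [IsScalarTower k (MonoidAlgebra k G) W] :
    (ofModule' (k := k) (G := G) W).invariants = fixedPts k G W :=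
  rfl

section FiniteCyclic

variable {k G V : Type*} [Field k] [Group G] [Finite G] [AddCommGroup V] [Module k V]
  [FiniteDimensional k V]

theorem finrank_coinvariants_eq_finrank_invariants_of_forall_mem_zpowers
    (ρ : Representation k G V) (σ : G) (hσ : ∀ g, g ∈ Subgroup.zpowers σ) :
    Module.finrank k ρ.Coinvariants = Module.finrank k ρ.invariants := by
  have hinv : ρ.invariants = LinearMap.ker (ρ σ - LinearMap.id) := by
    ext x
    simp [mem_invariants_iff_of_forall_mem_zpowers ρ σ hσ, sub_eq_zero]
  change Module.finrank k (V ⧸ Coinvariants.ker ρ) = _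
  rw [hinv, FiniteCyclicGroup.coinvariantsKer_eq_range ρ σ hσ]
  have := (LinearMap.range (ρ σ - LinearMap.id)).finrank_quotient_add_finrank
  have := (ρ σ - LinearMap.id).finrank_range_add_finrank_ker
  omega

end FiniteCyclic

section GroupAlgebraModule

variable {k G W : Type*} [CommRing k] [Monoid G] [AddCommGroup W]
  [Module (MonoidAlgebra k G) W] [Module k W] [IsScalarTower k (MonoidAlgebra k G) W]

theorem Coinvariants.mk_ofModule'_smul (a : MonoidAlgebra k G) (w : W) :
    Coinvariants.mk (ofModule' (k := k) (G := G) W) (a • w) =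
      MonoidAlgebra.lift k k G 1 a • Coinvariants.mk (ofModule' (k := k) (G := G) W) w := by
  induction a using MonoidAlgebra.induction_on with
  | of g => exact (Coinvariants.mk_self_apply (ofModule' (k := k) (G := G) W) g w).trans (by simp)
  | add a b ha hb => rw [add_smul, map_add, ha, hb, map_add, add_smul]
  | smul r a ha => rw [smul_assoc, map_smul, ha, map_smul, smul_assoc]

theorem Coinvariants.mk_ofModule'_comp_subtype_surjective (W' : Submodule k W)
    (hgen : Submodule.span (MonoidAlgebra k G) (W' : Set W) = ⊤) :
    Function.Surjective (Coinvariants.mk (ofModule' (k := k) (G := G) W) ∘ₗ W'.subtype) := by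
  intro q
  obtain ⟨w, rfl⟩ := Coinvariants.mk_surjective _ q
  have hw : w ∈ Submodule.span (MonoidAlgebra k G) (W' : Set W) := hgen ▸ Submodule.mem_top
  induction hw using Submodule.span_induction with
  | mem x hx => exact ⟨⟨x, hx⟩, rfl⟩
  | zero => exact ⟨0, by simp⟩
  | add x y _ _ hx hy =>
    obtain ⟨x', hx'⟩ := hx
    obtain ⟨y', hy'⟩ := hy
    exact ⟨x' + y', by rw [map_add, hx', hy', map_add]⟩
  | smul a x _ hx =>
    obtain ⟨x', hx'⟩ := hx
    exact ⟨MonoidAlgebra.lift k k G 1 a • x', by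
      rw [map_smul, hx', Coinvariants.mk_ofModule'_smul]⟩

end GroupAlgebraModule

end Representation

open Representation

theorem stmt0_general (p : ℕ) [Fact p.Prime] (k U W : Type*) [Field k]
    [Group U] (hU : IsCyclic U) (hcard : Nat.card U = p)
    [AddCommGroup W] [Module (MonoidAlgebra k U) W] [Module k W]
    [IsScalarTower k (MonoidAlgebra k U) W]
    (W' : Submodule k W) [FiniteDimensional k W']
    (hgen : Submodule.span (MonoidAlgebra k U) (W' : Set W) = ⊤)
    (hdim : Module.finrank k W' = Module.finrank k (fixedPts k U W))
    (η : MonoidAlgebra k U ⊗[k] W' →ₗ[k] W)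
    (hη : ∀ (a : MonoidAlgebra k U) (w : W'), η (a ⊗ₜ[k] w) = a • (w : W))
    (ε : MonoidAlgebra k U ⊗[k] W' →ₗ[k] W')
    (hε : ∀ (a : MonoidAlgebra k U) (w : W'),
      ε (a ⊗ₜ[k] w) = (MonoidAlgebra.lift k k U 1 a) • w) :
    ∀ x, η x = 0 → ε x = 0 := by
  have : Finite U := Nat.finite_of_card_ne_zero (hcard ▸ (Fact.out : p.Prime).ne_zero)
  have : FiniteDimensional k W :=
    Module.Finite.of_span_eq_top_of_submodule (A := MonoidAlgebra k U) W' hgen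
  obtain ⟨σ, hσ⟩ := hU.exists_generator
  let f := Coinvariants.mk (ofModule' (k := k) (G := U) W) ∘ₗ W'.subtype
  have hf : Function.Injective f := by
    refine (LinearMap.injective_iff_surjective_of_finrank_eq_finrank ?_).2
      (Coinvariants.mk_ofModule'_comp_subtype_surjective W' hgen)
    rw [hdim, finrank_coinvariants_eq_finrank_invariants_of_forall_mem_zpowers _ σ hσ,
      invariants_ofModule']
  have hcomm : Coinvariants.mk (ofModule' (k := k) (G := U) W) ∘ₗ η = f ∘ₗ ε := by
    ext a w
    simp [f, hη, hε, Coinvariants.mk_ofModule'_smul]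
  intro x hx
  exact hf (by simpa [hx] using (LinearMap.congr_fun hcomm x).symm)

theorem stmt0 (p : ℕ) [Fact p.Prime] (k U W : Type*) [Field k] [CharP k p]
    [Group U] (hU : IsCyclic U) (hcard : Nat.card U = p)
    [AddCommGroup W] [Module (MonoidAlgebra k U) W] [Module k W]
    [IsScalarTower k (MonoidAlgebra k U) W]
    (W' : Submodule k W) [FiniteDimensional k W']
    (hgen : Submodule.span (MonoidAlgebra k U) (W' : Set W) = ⊤)
    (hdim : Module.finrank k W' = Module.finrank k (fixedPts k U W))
    (η : MonoidAlgebra k U ⊗[k] W' →ₗ[k] W)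
    (hη : ∀ (a : MonoidAlgebra k U) (w : W'), η (a ⊗ₜ[k] w) = a • (w : W))
    (ε : MonoidAlgebra k U ⊗[k] W' →ₗ[k] W')
    (hε : ∀ (a : MonoidAlgebra k U) (w : W'),
      ε (a ⊗ₜ[k] w) = (MonoidAlgebra.lift k k U 1 a) • w) :
    ∀ x, η x = 0 → ε x = 0 :=
  stmt0_general p k U W hU hcard W' hgen hdim η hη ε hε
end

section
/- Let k be a field of characteristic p and let Ū ⊆ SL₂(F_p) be the subgroup of upper unipotent matrices, ν its generator, t = [ν] - 1 ∈ k[Ū], and n_s = (0 1; -1 0). In the induced representation ind_{Ū}^{SL₂(F_p)} 1_k, the characteristic function χ_Ū of Ū satisfies t^{p-1} n_s⁻¹ χ_Ū = T_{n_s} χ_Ū, where T_{n_s} is the Hecke operator of the double coset Ū n_s Ū. -/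
/-! In characteristic `p` one has `(X - 1) ^ (p - 1) = 1 + X + ⋯ + X ^ (p - 1)`, so the left-hand
side at `h` is `∑_{a ∈ 𝔽_p} χ_Ū(h ν^a n_s⁻¹)`, the number of `a` with `h ν^a ∈ Ū n_s`. As
`Ū ∩ n_s Ū n_s⁻¹ = 1` (compare one matrix entry), this number is `1` on `Ū n_s Ū` and `0` off it.
On the right-hand side only the representative of the trivial coset lies in `Ū`, and the double
coset is right `Ū`-invariant, so the sum is also the indicator of `Ū n_s Ū`. -/

/-- The upper unipotent element `(1 a; 0 1)` of `SL₂(F_p)`. -/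
def nuEl (p : ℕ) (a : ZMod p) : Matrix.SpecialLinearGroup (Fin 2) (ZMod p) :=
  ⟨!![1, a; 0, 1], by norm_num [Matrix.det_fin_two_of]⟩

/-- The element `n_s = (0 1; -1 0)` of `SL₂(F_p)`. -/
def nsEl (p : ℕ) : Matrix.SpecialLinearGroup (Fin 2) (ZMod p) :=
  ⟨!![0, 1; -1, 0], by norm_num [Matrix.det_fin_two_of]⟩

/-- The upper unipotent subgroup `Ū` of `SL₂(F_p)`, as a set. -/
def Uset (p : ℕ) : Set (Matrix.SpecialLinearGroup (Fin 2) (ZMod p)) :=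
  Set.range (nuEl p)

/-- The characteristic function of `Ū`. -/
noncomputable def chiU (p : ℕ) (k : Type*) [Field k] :
    Matrix.SpecialLinearGroup (Fin 2) (ZMod p) → k :=
  Set.indicator (Uset p) 1

/-- The right translation operator `(g • f)(x) = f(x g)` on functions on `SL₂(F_p)`. -/
def Rop (p : ℕ) (k : Type*) [Field k] (g : Matrix.SpecialLinearGroup (Fin 2) (ZMod p)) :
    (Matrix.SpecialLinearGroup (Fin 2) (ZMod p) → k) →ₗ[k]
      (Matrix.SpecialLinearGroup (Fin 2) (ZMod p) → k) :=
  LinearMap.funLeft k k fun x => x * g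

/-- The double coset `Ū n_s Ū`, as a set. -/
def UnsU (p : ℕ) : Set (Matrix.SpecialLinearGroup (Fin 2) (ZMod p)) :=
  {g | ∃ u v, u ∈ Uset p ∧ v ∈ Uset p ∧ g = u * nsEl p * v}


open Finset Polynomial

theorem sub_one_pow_pred_eq_sum_range_pow {R A : Type*} [CommRing R] [Ring A] [Algebra R A]
    (p : ℕ) [Fact p.Prime] [CharP R p] (a : A) :
    (a - 1) ^ (p - 1) = ∑ i ∈ range p, a ^ i := by
  have h := congrArg (aeval a)
    (cyclotomic_mul_prime_eq_pow_of_not_dvd R (n := 1) (Nat.Prime.not_dvd_one Fact.out))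
  simpa [cyclotomic_prime] using h.symm

theorem sum_range_natCast_eq_sum_zmod {M : Type*} [AddCommMonoid M] (p : ℕ) [NeZero p]
    (f : ZMod p → M) : ∑ i ∈ range p, f i = ∑ a, f a :=
  sum_nbij' Nat.cast ZMod.val (by simp) (by simp [ZMod.val_lt])
    (fun _ hi => ZMod.val_cast_of_lt (mem_range.1 hi)) (fun a _ => ZMod.natCast_zmod_val a)
    (fun _ _ => rfl)

theorem sum_indicator_mul_inv_mul_indicator_subgroup {G R : Type*} [Group G]
    [NonAssocSemiring R] (H : Subgroup G) {D : Set G} (hD : ∀ g, ∀ u ∈ H, g * u ∈ D ↔ g ∈ D)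
    (S : Finset G) (hS : ∀ g, ∃! s, s ∈ S ∧ ∃ u ∈ H, g = u * s) (h : G) :
    ∑ x ∈ S, D.indicator 1 (h * x⁻¹) * (H : Set G).indicator (1 : G → R) x
      = D.indicator 1 h := by
  obtain ⟨s₀, ⟨hs₀S, u₀, hu₀, h1⟩, huniq⟩ := hS 1
  have hs₀ : s₀ ∈ H := by
    rw [eq_inv_of_mul_eq_one_right h1.symm]
    exact H.inv_mem hu₀
  rw [sum_eq_single_of_mem s₀ hs₀S]
  · rw [Set.indicator_of_mem (SetLike.mem_coe.2 hs₀), Pi.one_apply, mul_one]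
    by_cases hh : h ∈ D
    · simp only [Set.indicator_of_mem hh, Set.indicator_of_mem ((hD h _ (H.inv_mem hs₀)).2 hh),
        Pi.one_apply]
    · rw [Set.indicator_of_notMem hh, Set.indicator_of_notMem (mt (hD h _ (H.inv_mem hs₀)).1 hh)]
  · intro x hxS hx
    have hxH : x ∉ H := fun hxH => hx (huniq x ⟨hxS, x⁻¹, H.inv_mem hxH, by group⟩)
    rw [Set.indicator_of_notMem (s := (H : Set G)) hxH, mul_zero]

section

variable {p : ℕ}

theorem coe_nuEl (a : ZMod p) : (nuEl p a : Matrix (Fin 2) (Fin 2) (ZMod p)) = !![1, a; 0, 1] :=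
  rfl

theorem coe_nsEl : (nsEl p : Matrix (Fin 2) (Fin 2) (ZMod p)) = !![0, 1; -1, 0] :=
  rfl

theorem nuEl_mul (a b : ZMod p) : nuEl p a * nuEl p b = nuEl p (a + b) :=
  Subtype.ext (by simp [Matrix.SpecialLinearGroup.coe_mul, coe_nuEl, add_comm])

theorem nuEl_zero : nuEl p 0 = 1 :=
  Subtype.ext (by simp [coe_nuEl, Matrix.one_fin_two])

theorem nuEl_one_pow (n : ℕ) : nuEl p 1 ^ n = nuEl p n := by
  induction n with
  | zero => simp [nuEl_zero]
  | succ n ih => rw [pow_succ, ih, nuEl_mul, Nat.cast_succ]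

variable (p) in
def unipotentSubgroup : Subgroup (Matrix.SpecialLinearGroup (Fin 2) (ZMod p)) where
  carrier := Uset p
  mul_mem' := by
    rintro _ _ ⟨a, rfl⟩ ⟨b, rfl⟩
    exact ⟨a + b, (nuEl_mul a b).symm⟩
  one_mem' := ⟨0, nuEl_zero⟩
  inv_mem' := by
    rintro _ ⟨a, rfl⟩
    exact ⟨-a, (inv_eq_of_mul_eq_one_right (by rw [nuEl_mul, add_neg_cancel, nuEl_zero])).symm⟩

theorem nsEl_mul_nuEl_mul_nsEl_inv_mem_Uset_iff (d : ZMod p) :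
    nsEl p * nuEl p d * (nsEl p)⁻¹ ∈ Uset p ↔ d = 0 := by
  constructor
  · rintro ⟨e, he⟩
    have hcomm : nuEl p e * nsEl p = nsEl p * nuEl p d := by rw [he]; group
    simpa [Matrix.SpecialLinearGroup.coe_mul, coe_nuEl, coe_nsEl, Matrix.mul_fin_two] using
      congrArg (fun g : Matrix.SpecialLinearGroup (Fin 2) (ZMod p) => g 1 1) hcomm
  · rintro rfl
    rw [nuEl_zero, mul_one, mul_inv_cancel]
    exact (unipotentSubgroup p).one_mem

theorem mul_mem_UnsU_iff {g u : Matrix.SpecialLinearGroup (Fin 2) (ZMod p)}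
    (hu : u ∈ unipotentSubgroup p) : g * u ∈ UnsU p ↔ g ∈ UnsU p := by
  constructor
  · rintro ⟨v, w, hv, hw, hg⟩
    exact ⟨v, w * u⁻¹, hv, (unipotentSubgroup p).mul_mem hw ((unipotentSubgroup p).inv_mem hu),
      by rw [← mul_assoc, ← hg, mul_inv_cancel_right]⟩
  · rintro ⟨v, w, hv, hw, rfl⟩
    exact ⟨v, w * u, hv, (unipotentSubgroup p).mul_mem hw hu, by group⟩

theorem nuEl_mul_nsEl_mul_nuEl_mem_UnsU (b c : ZMod p) : nuEl p b * nsEl p * nuEl p c ∈ UnsU p :=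
  ⟨_, _, ⟨b, rfl⟩, ⟨c, rfl⟩, rfl⟩

theorem Rop_apply (k : Type*) [Field k] (g : Matrix.SpecialLinearGroup (Fin 2) (ZMod p))
    (f : Matrix.SpecialLinearGroup (Fin 2) (ZMod p) → k) (x) : Rop p k g f x = f (x * g) :=
  rfl

theorem Rop_pow_apply (k : Type*) [Field k] (g : Matrix.SpecialLinearGroup (Fin 2) (ZMod p))
    (n : ℕ) (f : Matrix.SpecialLinearGroup (Fin 2) (ZMod p) → k) (x) :
    (Rop p k g ^ n) f x = f (x * g ^ n) := by
  induction n generalizing x with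
  | zero => simp
  | succ n ih => rw [pow_succ', Module.End.mul_apply, Rop_apply, ih, mul_assoc, ← pow_succ']

variable [NeZero p]

theorem sum_chiU_mul_nuEl_mul_nsEl_inv (k : Type*) [Field k]
    (h : Matrix.SpecialLinearGroup (Fin 2) (ZMod p)) :
    ∑ a, chiU p k (h * nuEl p a * (nsEl p)⁻¹) = (UnsU p).indicator 1 h := by
  classical
  by_cases hh : h ∈ UnsU p
  · obtain ⟨_, _, ⟨b, rfl⟩, ⟨c, rfl⟩, rfl⟩ := hh
    have hterm : ∀ a, chiU p k (nuEl p b * nsEl p * nuEl p c * nuEl p a * (nsEl p)⁻¹)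
        = if -c = a then 1 else 0 := by
      intro a
      have hmem : nuEl p b * nsEl p * nuEl p c * nuEl p a * (nsEl p)⁻¹ ∈ Uset p ↔ -c = a := by
        rw [show nuEl p b * nsEl p * nuEl p c * nuEl p a * (nsEl p)⁻¹
            = nuEl p b * (nsEl p * nuEl p (c + a) * (nsEl p)⁻¹) by rw [← nuEl_mul]; group]
        exact ((unipotentSubgroup p).mul_mem_cancel_left ⟨b, rfl⟩).trans
          ((nsEl_mul_nuEl_mul_nsEl_inv_mem_Uset_iff _).trans neg_eq_iff_add_eq_zero.symm)
      by_cases ha : -c = a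
      · rw [if_pos ha, chiU, Set.indicator_of_mem (hmem.2 ha), Pi.one_apply]
      · rw [if_neg ha, chiU, Set.indicator_of_notMem (mt hmem.1 ha)]
    rw [sum_congr rfl fun a _ => hterm a, sum_ite_eq, if_pos (mem_univ _),
      Set.indicator_of_mem (nuEl_mul_nsEl_mul_nuEl_mem_UnsU b c), Pi.one_apply]
  · rw [Set.indicator_of_notMem hh]
    refine sum_eq_zero fun a _ => Set.indicator_of_notMem ?_ _
    rintro ⟨e, he⟩
    refine hh ⟨nuEl p e, nuEl p (-a), ⟨e, rfl⟩, ⟨-a, rfl⟩, ?_⟩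
    rw [he, inv_mul_cancel_right, mul_assoc, nuEl_mul, add_neg_cancel, nuEl_zero, mul_one]

end

/-- In `ind_Ū^{SL₂(F_p)} 1_k`, one has `t^{p-1} n_s⁻¹ χ_Ū = T_{n_s} χ_Ū`, where `T_{n_s}`
is the Hecke operator attached to the double coset `Ū n_s Ū`, computed via any set `S` of
representatives of the right cosets `Ū\SL₂(F_p)`. -/
theorem stmt5 (p : ℕ) [Fact p.Prime] (k : Type*) [Field k] [CharP k p]
    (S : Finset (Matrix.SpecialLinearGroup (Fin 2) (ZMod p)))
    (hS : ∀ g : Matrix.SpecialLinearGroup (Fin 2) (ZMod p),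
      ∃! s, s ∈ S ∧ ∃ u ∈ Uset p, g = u * s) :
    (((Rop p k (nuEl p 1) - LinearMap.id :
        Module.End k (Matrix.SpecialLinearGroup (Fin 2) (ZMod p) → k)) ^ (p - 1))
      ((Rop p k (nsEl p)⁻¹) (chiU p k)))
      = fun h => ∑ x ∈ S, Set.indicator (UnsU p) 1 (h * x⁻¹) * chiU p k x := by
  funext h
  rw [← Module.End.one_eq_id, sub_one_pow_pred_eq_sum_range_pow (R := k), LinearMap.sum_apply,
    Finset.sum_apply]
  simp only [Rop_pow_apply, nuEl_one_pow, Rop_apply]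
  rw [sum_range_natCast_eq_sum_zmod p (fun a => chiU p k (h * nuEl p a * (nsEl p)⁻¹)),
    sum_chiU_mul_nuEl_mul_nsEl_inv]
  exact (sum_indicator_mul_inv_mul_indicator_subgroup (unipotentSubgroup p)
    (fun _ _ => mul_mem_UnsU_iff) S hS h).symm
end

section
/- Let k be a field of characteristic p and k_E⁺ = k[[t]]. Let H be a standard cyclic k_E⁺[φ^r]-module of perimeter m+1: H is a torsion k[[t]]-module generated by ker(t|_H), which has k-basis e_0,…,e_m, with integers 0 ≤ k_i ≤ p^r - 1 and units ϱ_i ∈ k^× satisfying t^{k_i} φ^r e_{i-1} = ϱ_i e_i for all i (indices mod m+1), where φ^r t = t^{p^r} φ^r. If k_i > 0 for at least one i, then the action of t on H is surjective. -/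
/-- If `H` is a standard cyclic `k_E⁺[φ^r]`-module of perimeter `m+1` and at least one of
the exponents `k_i` is positive, then the action of `t` on `H` is surjective. -/
theorem stmt7 (p : ℕ) [Fact p.Prime] (k : Type*) [Field k] [CharP k p] (r m : ℕ)
    (hr : 0 < r)
    (H : Type*) [AddCommGroup H] [Module (PowerSeries k) H] [Module k H]
    [IsScalarTower k (PowerSeries k) H]
    -- the `φ^r`-operator, `k`-linear with `φ^r ∘ t = t^{p^r} ∘ φ^r`
    (φ : H →ₗ[k] H)
    (hφ : ∀ x : H, φ ((PowerSeries.X : PowerSeries k) • x)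
      = ((PowerSeries.X : PowerSeries k) ^ (p ^ r)) • φ x)
    -- `H` is a torsion `k[[t]]`-module
    (htors : ∀ x : H, ∃ n : ℕ, ((PowerSeries.X : PowerSeries k) ^ n) • x = 0)
    -- `e_0, …, e_m` is a `k`-basis of `ker(t|_H)`
    (e : ZMod (m + 1) → H)
    (hker : ∀ i, (PowerSeries.X : PowerSeries k) • e i = 0)
    (hli : LinearIndependent k e)
    (hspan : ∀ x : H, (PowerSeries.X : PowerSeries k) • x = 0 →
      x ∈ Submodule.span k (Set.range e))
    -- `ker(t|_H)` generates `H` as a `k_E⁺[φ^r]`-module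
    (hgen : ∀ N : Submodule (PowerSeries k) H, (∀ y ∈ N, φ y ∈ N) →
      (∀ y : H, (PowerSeries.X : PowerSeries k) • y = 0 → y ∈ N) → ∀ x : H, x ∈ N)
    -- the structure constants
    (kk : ZMod (m + 1) → ℕ) (hkk : ∀ i, kk i ≤ p ^ r - 1)
    (ϱ : ZMod (m + 1) → kˣ)
    (hrel : ∀ i : ZMod (m + 1),
      ((PowerSeries.X : PowerSeries k) ^ (kk i)) • φ (e (i - 1)) = (ϱ i : k) • e i)
    (hpos : ∃ i, 0 < kk i) :
    Function.Surjective (fun x : H => (PowerSeries.X : PowerSeries k) • x) := by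

  classical
  set t : PowerSeries k := PowerSeries.X with ht
  set N : Submodule (PowerSeries k) H :=
    LinearMap.range (LinearMap.lsmul (PowerSeries k) H t) with hN
  have hmem : ∀ x : H, x ∈ N ↔ ∃ y : H, t • y = x := by
    intro x
    constructor
    · rintro ⟨y, rfl⟩; exact ⟨y, rfl⟩
    · rintro ⟨y, rfl⟩; exact ⟨y, rfl⟩
  have hpr : p ^ r - 1 + 1 = p ^ r :=
    Nat.succ_pred_eq_of_pos (pow_pos (Fact.out : p.Prime).pos r)
  have hksm : ∀ (a : k) (x : H), x ∈ N → a • x ∈ N := by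
    intro a x hx
    rw [← algebraMap_smul (PowerSeries k) a x]
    exact N.smul_mem _ hx
  have hφN : ∀ y ∈ N, φ y ∈ N := by
    intro y hy
    obtain ⟨x, rfl⟩ := (hmem y).1 hy
    refine (hmem _).2 ⟨t ^ (p ^ r - 1) • φ x, ?_⟩
    rw [hφ, smul_smul, ← pow_succ', hpr]
  have hstep : ∀ i : ZMod (m + 1), φ (e (i - 1)) ∈ N → e i ∈ N := by
    intro i hi
    have h0 : ((ϱ i : k)) • e i ∈ N := by
      rw [← hrel i]
      exact N.smul_mem _ hi
    have := hksm ((ϱ i : k))⁻¹ _ h0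
    rwa [smul_smul, inv_mul_cancel₀ (Units.ne_zero (ϱ i)), one_smul] at this
  obtain ⟨j, hj⟩ := hpos
  have hbase : e j ∈ N := by
    have h0 : ((ϱ j : k)) • e j ∈ N := by
      rw [← hrel j]
      refine (hmem _).2 ⟨t ^ (kk j - 1) • φ (e (j - 1)), ?_⟩
      rw [smul_smul, ← pow_succ', Nat.sub_add_cancel hj]
    have := hksm ((ϱ j : k))⁻¹ _ h0
    rwa [smul_smul, inv_mul_cancel₀ (Units.ne_zero (ϱ j)), one_smul] at this
  have hind : ∀ s : ℕ, e (j + (s : ZMod (m + 1))) ∈ N := by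
    intro s
    induction s with
    | zero => simpa using hbase
    | succ n ih =>
        have hidx : (j + ((n + 1 : ℕ) : ZMod (m + 1))) - 1 = j + (n : ZMod (m + 1)) := by
          push_cast
          ring
        refine hstep _ ?_
        rw [hidx]
        exact hφN _ ih
  have heN : ∀ i : ZMod (m + 1), e i ∈ N := by
    intro i
    have : j + (((i - j).val : ℕ) : ZMod (m + 1)) = i := by
      rw [ZMod.natCast_val, ZMod.cast_id]
      ring
    rw [← this]
    exact hind _
  have hker' : ∀ y : H, (PowerSeries.X : PowerSeries k) • y = 0 → y ∈ N := by
    intro y hy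
    have hsp := hspan y hy
    have hle : Submodule.span k (Set.range e) ≤ N.restrictScalars k := by
      rw [Submodule.span_le]
      rintro x ⟨i, rfl⟩
      exact heN i
    exact hle hsp
  intro x
  obtain ⟨y, hy⟩ := (hmem x).1 (hgen N hφN hker' x)
  exact ⟨y, hy⟩
end

section
/- Let H be a standard cyclic k_E⁺[φ^r]-module of perimeter m+1 with exponents k_0,…,k_m, at least one k_i > 0. Suppose that for every 1 ≤ j ≤ m there exists 0 ≤ i ≤ m with k_i ≠ k_{i+j} (indices mod m+1). Then H is irreducible as a k_E⁺[φ^r]-module. -/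
open Finset

private def mstep {m : ℕ} (kk : ZMod (m + 1) → ℕ) (s : Finset (ZMod (m + 1))) :
    Finset (ZMod (m + 1)) :=
  (s.image (· + 1)).filter fun i => kk i = (s.image (· + 1)).sup kk

private lemma mstep_subset {m : ℕ} (kk : ZMod (m + 1) → ℕ) (s : Finset (ZMod (m + 1))) :
    mstep kk s ⊆ s.image (· + 1) := Finset.filter_subset _ _

private lemma mstep_card_le {m : ℕ} (kk : ZMod (m + 1) → ℕ) (s : Finset (ZMod (m + 1))) :
    (mstep kk s).card ≤ s.card :=
  le_trans (Finset.card_le_card (mstep_subset kk s)) Finset.card_image_le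

private lemma mstep_nonempty {m : ℕ} (kk : ZMod (m + 1) → ℕ) {s : Finset (ZMod (m + 1))}
    (hs : s.Nonempty) : (mstep kk s).Nonempty := by
  obtain ⟨i, hi, hsup⟩ := Finset.exists_mem_eq_sup (s.image (· + 1)) (hs.image _) kk
  exact ⟨i, Finset.mem_filter.mpr ⟨hi, hsup.symm⟩⟩

private lemma mstep_card_eq {m : ℕ} (kk : ZMod (m + 1) → ℕ) {s : Finset (ZMod (m + 1))}
    (h : (mstep kk s).card = s.card) :
    mstep kk s = s.image (· + 1) ∧
      ∀ a ∈ s.image (· + 1), ∀ b ∈ s.image (· + 1), kk a = kk b := by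
  have heq : mstep kk s = s.image (· + 1) :=
    Finset.eq_of_subset_of_card_le (mstep_subset kk s) (Finset.card_image_le.trans h.ge)
  refine ⟨heq, fun a ha b hb => ?_⟩
  rw [← heq] at ha hb
  rw [(Finset.mem_filter.mp ha).2, (Finset.mem_filter.mp hb).2]

private lemma mstep_combo {m : ℕ} (kk : ZMod (m + 1) → ℕ)
    (hdist : ∀ j : ZMod (m + 1), j ≠ 0 → ∃ i, kk i ≠ kk (i + j))
    (s : Finset (ZMod (m + 1))) (hs : s.Nonempty) :
    ∃ n, ((mstep kk)^[n] s).card = 1 := by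
  have hne : ∀ n, ((mstep kk)^[n] s).Nonempty := by
    intro n
    induction n with
    | zero => exact hs
    | succ n ih => rw [Function.iterate_succ_apply']; exact mstep_nonempty kk ih
  set f : ℕ → ℕ := fun n => ((mstep kk)^[n] s).card with hf
  have hmono : ∀ n, f (n + 1) ≤ f n := by
    intro n; simp only [hf]; rw [Function.iterate_succ_apply']; exact mstep_card_le _ _
  have hanti : ∀ a b, a ≤ b → f b ≤ f a := by
    intro a b hab
    induction b with
    | zero => simp [Nat.le_zero.mp hab]
    | succ b ih =>
      rcases Nat.lt_or_ge a (b + 1) with h | h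
      · exact le_trans (hmono b) (ih (Nat.lt_succ_iff.mp h))
      · rw [le_antisymm hab h]
  obtain ⟨n0, hn0⟩ := Nat.sInf_mem (Set.range_nonempty f)
  have hconst : ∀ n, n0 ≤ n → f n = f n0 := fun n hn =>
    le_antisymm (hanti n0 n hn) (hn0 ▸ Nat.sInf_le ⟨n, rfl⟩)
  by_cases h1 : f n0 = 1
  · exact ⟨n0, h1⟩
  have h2 : 2 ≤ f n0 := by
    have := (hne n0).card_pos
    simp only [hf] at *
    omega
  exfalso
  have hstep : ∀ n, n0 ≤ n →
      (mstep kk)^[n + 1] s = ((mstep kk)^[n] s).image (· + 1) ∧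
      ∀ a ∈ (mstep kk)^[n + 1] s, ∀ b ∈ (mstep kk)^[n + 1] s, kk a = kk b := by
    intro n hn
    have hcard : (mstep kk ((mstep kk)^[n] s)).card = ((mstep kk)^[n] s).card := by
      have e1 := hconst (n + 1) (le_trans hn (Nat.le_succ n))
      have e2 := hconst n hn
      simp only [hf] at e1 e2
      rw [Function.iterate_succ_apply'] at e1
      omega
    obtain ⟨ha, hb⟩ := mstep_card_eq kk hcard
    rw [Function.iterate_succ_apply']
    exact ⟨ha, fun a haa b hbb => hb a (ha ▸ haa) b (ha ▸ hbb)⟩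
  set t1 := (mstep kk)^[n0 + 1] s with ht1
  have hshift : ∀ j : ℕ, (mstep kk)^[n0 + 1 + j] s = t1.image (· + (j : ZMod (m + 1))) := by
    intro j
    induction j with
    | zero => simp [ht1]
    | succ j ih =>
      have hr : n0 + 1 + (j + 1) = (n0 + 1 + j) + 1 := by ring
      rw [hr, (hstep (n0 + 1 + j) (by omega)).1, ih, Finset.image_image]
      congr 1
      funext x
      simp only [Function.comp_apply]
      push_cast
      ring
  have hconstk : ∀ (g : ZMod (m + 1)), ∀ a ∈ t1, ∀ b ∈ t1, kk (a + g) = kk (b + g) := by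
    intro g a ha b hb
    obtain ⟨j, rfl⟩ := ZMod.natCast_zmod_surjective (n := m + 1) g
    have h := (hstep (n0 + j) (by omega)).2
    have hrw : n0 + j + 1 = n0 + 1 + j := by ring
    rw [hrw, hshift j] at h
    exact h _ (Finset.mem_image_of_mem _ ha) _ (Finset.mem_image_of_mem _ hb)
  have hcard1 : 1 < t1.card := by
    have := hconst (n0 + 1) (Nat.le_succ n0)
    simp only [hf] at this
    have h2' : 2 ≤ ((mstep kk)^[n0] s).card := h2
    rw [ht1]
    omega
  obtain ⟨a, ha, b, hb, hab⟩ := Finset.one_lt_card.mp hcard1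
  obtain ⟨i, hi⟩ := hdist (b - a) (sub_ne_zero.mpr (Ne.symm hab))
  have h := hconstk (i - a) a ha b hb
  rw [show a + (i - a) = i by ring, show b + (i - a) = i + (b - a) by ring] at h
  exact hi h



/-- A standard cyclic `k_E⁺[φ^r]`-module of perimeter `m+1` whose sequence of exponents
`k_i` is not periodic of any smaller period is irreducible as a `k_E⁺[φ^r]`-module. -/
theorem stmt9 (p : ℕ) [Fact p.Prime] (k : Type*) [Field k] [CharP k p] (r m : ℕ)
    (hr : 0 < r)
    (H : Type*) [AddCommGroup H] [Module (PowerSeries k) H] [Module k H]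
    [IsScalarTower k (PowerSeries k) H]
    -- the `φ^r`-operator, `k`-linear with `φ^r ∘ t = t^{p^r} ∘ φ^r`
    (φ : H →ₗ[k] H)
    (hφ : ∀ x : H, φ ((PowerSeries.X : PowerSeries k) • x)
      = ((PowerSeries.X : PowerSeries k) ^ (p ^ r)) • φ x)
    -- `H` is a torsion `k[[t]]`-module
    (htors : ∀ x : H, ∃ n : ℕ, ((PowerSeries.X : PowerSeries k) ^ n) • x = 0)
    -- `e_0, …, e_m` is a `k`-basis of `ker(t|_H)`
    (e : ZMod (m + 1) → H)
    (hker : ∀ i, (PowerSeries.X : PowerSeries k) • e i = 0)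
    (hli : LinearIndependent k e)
    (hspan : ∀ x : H, (PowerSeries.X : PowerSeries k) • x = 0 →
      x ∈ Submodule.span k (Set.range e))
    -- `ker(t|_H)` generates `H` as a `k_E⁺[φ^r]`-module
    (hgen : ∀ N : Submodule (PowerSeries k) H, (∀ y ∈ N, φ y ∈ N) →
      (∀ y : H, (PowerSeries.X : PowerSeries k) • y = 0 → y ∈ N) → ∀ x : H, x ∈ N)
    -- the structure constants
    (kk : ZMod (m + 1) → ℕ) (hkk : ∀ i, kk i ≤ p ^ r - 1)
    (ϱ : ZMod (m + 1) → kˣ)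
    (hrel : ∀ i : ZMod (m + 1),
      ((PowerSeries.X : PowerSeries k) ^ (kk i)) • φ (e (i - 1)) = (ϱ i : k) • e i)
    (hpos : ∃ i, 0 < kk i)
    (hdist : ∀ j : ZMod (m + 1), j ≠ 0 → ∃ i, kk i ≠ kk (i + j)) :
    ∀ N : Submodule (PowerSeries k) H, (∀ y ∈ N, φ y ∈ N) → N ≠ ⊥ → N = ⊤ := by
  classical
  intro N hφN hNbot
  have hkN : ∀ (a : k) (x : H), x ∈ N → a • x ∈ N := by
    intro a x hx
    rw [← algebraMap_smul (PowerSeries k) a x]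
    exact N.smul_mem _ hx
  have hXe : ∀ (n : ℕ) (i), (PowerSeries.X : PowerSeries k) ^ (n + 1) • e i = 0 := by
    intro n i
    rw [pow_succ, mul_smul, hker, smul_zero]
  -- the key step lemma
  have key : ∀ (s : Finset (ZMod (m + 1))) (c : ZMod (m + 1) → k),
      (∀ i ∈ s, c i ≠ 0) → (∑ i ∈ s, c i • e i) ∈ N →
      ∃ c' : ZMod (m + 1) → k, (∀ j ∈ mstep kk s, c' j ≠ 0) ∧
        (∑ j ∈ mstep kk s, c' j • e j) ∈ N := by
    intro s c hc hmem
    set M := (s.image (· + 1)).sup kk with hM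
    have hXMφ : ∀ i ∈ s, (PowerSeries.X : PowerSeries k) ^ M • φ (e i)
        = (PowerSeries.X : PowerSeries k) ^ (M - kk (i + 1)) • ((ϱ (i + 1) : k) • e (i + 1)) := by
      intro i hi
      have hle : kk (i + 1) ≤ M := Finset.le_sup (Finset.mem_image_of_mem _ hi)
      have h := hrel (i + 1)
      rw [add_sub_cancel_right] at h
      rw [← h, ← mul_smul, ← pow_add, Nat.sub_add_cancel hle]
    have hz : (PowerSeries.X : PowerSeries k) ^ M • φ (∑ i ∈ s, c i • e i)
        = ∑ i ∈ s.filter (fun i => kk (i + 1) = M), (c i * (ϱ (i + 1) : k)) • e (i + 1) := by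
      rw [map_sum, Finset.smul_sum, Finset.sum_filter]
      apply Finset.sum_congr rfl
      intro i hi
      rw [map_smul, smul_comm, hXMφ i hi]
      by_cases hMi : kk (i + 1) = M
      · rw [if_pos hMi, hMi, Nat.sub_self, pow_zero, one_smul, smul_smul]
      · rw [if_neg hMi]
        have hle : kk (i + 1) ≤ M := Finset.le_sup (Finset.mem_image_of_mem _ hi)
        obtain ⟨d, hd⟩ := Nat.exists_eq_succ_of_ne_zero
          (Nat.sub_ne_zero_of_lt (lt_of_le_of_ne hle hMi))
        rw [hd, smul_comm ((PowerSeries.X : PowerSeries k) ^ (d + 1)), hXe, smul_zero, smul_zero]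
    have hzmem : (∑ i ∈ s.filter (fun i => kk (i + 1) = M),
        (c i * (ϱ (i + 1) : k)) • e (i + 1)) ∈ N := by
      rw [← hz]
      exact N.smul_mem _ (hφN _ hmem)
    have himg : mstep kk s = (s.filter (fun i => kk (i + 1) = M)).image (· + 1) := by
      ext j
      simp only [mstep, Finset.mem_filter, Finset.mem_image, ← hM]
      constructor
      · rintro ⟨⟨i, hi, rfl⟩, hMi⟩; exact ⟨i, ⟨hi, hMi⟩, rfl⟩
      · rintro ⟨i, ⟨hi, hMi⟩, rfl⟩; exact ⟨⟨i, hi, rfl⟩, hMi⟩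
    refine ⟨fun j => c (j - 1) * (ϱ j : k), ?_, ?_⟩
    · intro j hj
      obtain ⟨i, hi, rfl⟩ := Finset.mem_image.mp (mstep_subset kk s hj)
      simp only [add_sub_cancel_right]
      exact mul_ne_zero (hc i hi) (Units.ne_zero _)
    · rw [himg, Finset.sum_image (fun a _ b _ h => by exact add_left_injective 1 h)]
      convert hzmem using 2 with i hi
      simp only [add_sub_cancel_right]
  -- iterate the key lemma
  have iter : ∀ (n : ℕ) (s : Finset (ZMod (m + 1))) (c : ZMod (m + 1) → k),
      (∀ i ∈ s, c i ≠ 0) → (∑ i ∈ s, c i • e i) ∈ N →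
      ∃ c' : ZMod (m + 1) → k, (∀ j ∈ (mstep kk)^[n] s, c' j ≠ 0) ∧
        (∑ j ∈ (mstep kk)^[n] s, c' j • e j) ∈ N := by
    intro n
    induction n with
    | zero => intro s c h1 h2; exact ⟨c, h1, h2⟩
    | succ n ih =>
      intro s c h1 h2
      obtain ⟨c', h1', h2'⟩ := key s c h1 h2
      rw [Function.iterate_succ_apply]
      exact ih (mstep kk s) c' h1' h2'
  -- find a nonzero element of N killed by X
  obtain ⟨x, hxN, hx0⟩ := (Submodule.ne_bot_iff N).mp hNbot
  have hex := htors x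
  have hfs := Nat.find_spec hex
  have hf0 : Nat.find hex ≠ 0 := by
    intro h
    rw [h, pow_zero, one_smul] at hfs
    exact hx0 hfs
  set y := (PowerSeries.X : PowerSeries k) ^ (Nat.find hex - 1) • x with hy
  have hyN : y ∈ N := N.smul_mem _ hxN
  have hyker : (PowerSeries.X : PowerSeries k) • y = 0 := by
    rw [hy, ← mul_smul, ← pow_succ', Nat.sub_add_cancel (Nat.one_le_iff_ne_zero.mpr hf0)]
    exact hfs
  have hy0 : y ≠ 0 := by
    intro h
    exact Nat.find_min hex (Nat.sub_lt (Nat.pos_of_ne_zero hf0) one_pos) (by rw [← hy]; exact h)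
  -- decompose y in the basis
  obtain ⟨c, hc⟩ := (Submodule.mem_span_range_iff_exists_fun k).mp (hspan y hyker)
  classical
  set s := Finset.univ.filter (fun i => c i ≠ 0) with hs
  have hsum : (∑ i ∈ s, c i • e i) = y := by
    rw [← hc, hs]
    apply Finset.sum_filter_of_ne
    intro i _ h
    intro hci
    exact h (by rw [hci, zero_smul])
  have hsmem : (∑ i ∈ s, c i • e i) ∈ N := hsum ▸ hyN
  have hcs : ∀ i ∈ s, c i ≠ 0 := by
    intro i hi
    exact (Finset.mem_filter.mp hi).2
  have hsne : s.Nonempty := by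
    rw [Finset.nonempty_iff_ne_empty]
    intro h
    rw [h, Finset.sum_empty] at hsum
    exact hy0 hsum.symm
  -- shrink to a singleton
  obtain ⟨n, hcard⟩ := mstep_combo kk hdist s hsne
  obtain ⟨c', hc'0, hc'mem⟩ := iter n s c hcs hsmem
  obtain ⟨j, hj⟩ := Finset.card_eq_one.mp hcard
  rw [hj, Finset.sum_singleton] at hc'mem
  have hcj : c' j ≠ 0 := hc'0 j (hj ▸ Finset.mem_singleton_self j)
  have hej : e j ∈ N := by
    have h := hkN (c' j)⁻¹ _ hc'mem
    rwa [smul_smul, inv_mul_cancel₀ hcj, one_smul] at h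
  -- propagate to all basis vectors
  have hstep1 : ∀ i, e i ∈ N → e (i + 1) ∈ N := by
    intro i hi
    have h := hrel (i + 1)
    rw [add_sub_cancel_right] at h
    have hm : ((ϱ (i + 1) : k)) • e (i + 1) ∈ N := h ▸ N.smul_mem _ (hφN _ hi)
    have h2 := hkN ((ϱ (i + 1) : k))⁻¹ _ hm
    rwa [smul_smul, inv_mul_cancel₀ (Units.ne_zero _), one_smul] at h2
  have hall : ∀ (d : ℕ), e (j + (d : ZMod (m + 1))) ∈ N := by
    intro d
    induction d with
    | zero => simpa using hej
    | succ d ih =>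
      have h := hstep1 _ ih
      have heq : (j + (d : ZMod (m + 1))) + 1 = j + ((d + 1 : ℕ) : ZMod (m + 1)) := by
        push_cast; ring
      rwa [heq] at h
  have halle : ∀ i, e i ∈ N := by
    intro i
    obtain ⟨d, hd⟩ := ZMod.natCast_zmod_surjective (n := m + 1) (i - j)
    have h := hall d
    rw [hd] at h
    rwa [show j + (i - j) = i by ring] at h
  -- conclude
  rw [eq_top_iff]
  intro z _
  refine hgen N hφN ?_ z
  intro w hw
  have hle : Submodule.span k (Set.range e) ≤ N.restrictScalars k := by
    rw [Submodule.span_le]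
    rintro _ ⟨i, rfl⟩
    exact halle i
  exact hle (hspan w hw)
end

section
/- In k_E⁺ = k[[t]] with the operator ψ^r defined as the k-linear left inverse of φ^r (where φ^r(t) = (1+t)^{p^r} - 1) with kernel the span of t^i φ^r(k_E⁺) for i not divisible appropriately, one has: for 0 ≤ n_0,…,n_{r-1} ≤ p-1 and 0 ≤ n_r, ψ^r(t^{n_0 + n_1 p + … + n_r p^r}) = (-1)^{n_0 + … + n_{r-1}} t^{n_r}. -/
/-!
Write `a = n_0 + n_1 p + … + n_{r-1} p^{r-1} < p^r`, so that
`t^{a + n_r p^r} = t^a · φ^r(t^{n_r})`, since `φ^r(t) = t^{p^r}` in characteristic `p`.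
Expanding `t^a = ((1+t) - 1)^a` binomially, `ψ^r` kills every term `(1+t)^m φ^r(f)` with
`0 < m ≤ a < p^r` and keeps only the constant term `(-1)^a φ^r(f)`. Finally
`(-1)^{p^i} = -1` in characteristic `p`, so `(-1)^a = (-1)^{n_0 + … + n_{r-1}}`.
-/

open Finset

theorem Nat.sum_digits_mul_pow_lt {b s : ℕ} {n : ℕ → ℕ} (hn : ∀ i < s, n i < b) :
    ∑ i ∈ range s, n i * b ^ i < b ^ s := by
  induction s with
  | zero => simp
  | succ s ih =>
    have hprefix := ih fun i hi => hn i (hi.trans s.lt_succ_self)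
    have hdigit : n s + 1 ≤ b := hn s s.lt_succ_self
    calc ∑ i ∈ range (s + 1), n i * b ^ i
        = ∑ i ∈ range s, n i * b ^ i + n s * b ^ s := sum_range_succ _ _
      _ < (n s + 1) * b ^ s := by linarith
      _ ≤ b ^ (s + 1) := by rw [pow_succ']; exact Nat.mul_le_mul_right _ hdigit

theorem neg_one_pow_sum_mul_expChar_pow (R : Type*) [CommRing R] (p : ℕ) [ExpChar R p]
    (s : Finset ℕ) (n : ℕ → ℕ) :
    (-1 : R) ^ (∑ i ∈ s, n i * p ^ i) = (-1) ^ (∑ i ∈ s, n i) := by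
  rw [← prod_pow_eq_pow_sum, ← prod_pow_eq_pow_sum]
  exact prod_congr rfl fun i _ => by rw [pow_mul', neg_one_pow_expChar_pow]

theorem pow_eq_sum_smul_one_add_pow {R A : Type*} [CommRing R] [CommRing A] [Algebra R A]
    (x : A) (a : ℕ) :
    x ^ a = ∑ m ∈ range (a + 1), ((-1 : R) ^ (m + a) * a.choose m) • (1 + x) ^ m := by
  conv_lhs => rw [← add_sub_cancel_left 1 x, sub_pow]
  refine sum_congr rfl fun m _ => ?_
  rw [Algebra.smul_def, map_mul, map_pow, map_neg, map_one, map_natCast, one_pow, mul_one]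
  ring

theorem map_pow_mul_eq_neg_one_pow_smul {R A B : Type*} [CommRing R] [CommRing A] [Algebra R A]
    [AddCommGroup B] [Module R B] (ψ : A →ₗ[R] B) (φ : B → A) (x : A) {N : ℕ}
    (hψφ : ∀ f, ψ (φ f) = f)
    (hψ : ∀ m, 0 < m → m < N → ∀ f, ψ ((1 + x) ^ m * φ f) = 0)
    {a : ℕ} (ha : a < N) (f : B) :
    ψ (x ^ a * φ f) = (-1 : R) ^ a • f := by
  rw [pow_eq_sum_smul_one_add_pow (R := R), sum_mul, map_sum, sum_eq_single_of_mem 0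
    (mem_range.mpr a.succ_pos)]
  · simp [hψφ]
  · intro m hm hm0
    rw [smul_mul_assoc, map_smul, hψ m (Nat.pos_of_ne_zero hm0)
      ((Nat.lt_succ_iff.mp (mem_range.mp hm)).trans_lt ha), smul_zero]

theorem stmt11_general (p : ℕ) [Fact p.Prime] (k : Type*) [Field k] [CharP k p]
    (r : ℕ)
    (φ : PowerSeries k →ₐ[k] PowerSeries k)
    (hφX : φ PowerSeries.X = (1 + PowerSeries.X) ^ (p ^ r) - 1)
    (ψ : PowerSeries k →ₗ[k] PowerSeries k)
    (hψφ : ∀ f : PowerSeries k, ψ (φ f) = f)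
    (hψ0 : ∀ i : ℕ, 0 < i → i < p ^ r →
      ∀ f : PowerSeries k, ψ ((1 + PowerSeries.X) ^ i * φ f) = 0)
    (n : ℕ → ℕ) (hn : ∀ i, i < r → n i ≤ p - 1) :
    ψ (PowerSeries.X ^ (∑ i ∈ Finset.range (r + 1), n i * p ^ i))
      = (-1 : k) ^ (∑ i ∈ Finset.range r, n i) • (PowerSeries.X : PowerSeries k) ^ (n r) := by
  have : CharP (PowerSeries k) p := charP_of_injective_algebraMap' k p
  have hp : 0 < p := (Fact.out : p.Prime).pos
  have hφ : φ (PowerSeries.X ^ n r) = PowerSeries.X ^ (n r * p ^ r) := by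
    rw [map_pow, hφX, add_pow_char_pow, one_pow, add_sub_cancel_left, ← pow_mul, mul_comm]
  have hlow : ∑ i ∈ range r, n i * p ^ i < p ^ r :=
    Nat.sum_digits_mul_pow_lt fun i hi => by have := hn i hi; omega
  rw [sum_range_succ, pow_add, ← hφ,
    map_pow_mul_eq_neg_one_pow_smul ψ φ _ hψφ hψ0 hlow, neg_one_pow_sum_mul_expChar_pow]

/-- The explicit formula for the operator `ψ^r` on `k[[t]]`: for digits
`0 ≤ n_0, …, n_{r-1} ≤ p-1` and any `n_r ≥ 0`,
`ψ^r(t^{n_0 + n_1 p + … + n_r p^r}) = (-1)^{n_0 + … + n_{r-1}} t^{n_r}`.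
Here `ψ^r` is the `k`-linear left inverse of `φ^r` (the substitution
`t ↦ (1+t)^{p^r} - 1`) killing `(1+t)^i φ^r(k[[t]])` for `0 < i < p^r`. -/
theorem stmt11 (p : ℕ) [Fact p.Prime] (k : Type*) [Field k] [CharP k p]
    (r : ℕ) (hr : 0 < r)
    (φ : PowerSeries k →ₐ[k] PowerSeries k)
    (hφX : φ PowerSeries.X = (1 + PowerSeries.X) ^ (p ^ r) - 1)
    (ψ : PowerSeries k →ₗ[k] PowerSeries k)
    (hψφ : ∀ f : PowerSeries k, ψ (φ f) = f)
    (hψ0 : ∀ i : ℕ, 0 < i → i < p ^ r →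
      ∀ f : PowerSeries k, ψ ((1 + PowerSeries.X) ^ i * φ f) = 0)
    (n : ℕ → ℕ) (hn : ∀ i, i < r → n i ≤ p - 1) :
    ψ (PowerSeries.X ^ (∑ i ∈ Finset.range (r + 1), n i * p ^ i))
      = (-1 : k) ^ (∑ i ∈ Finset.range r, n i) • (PowerSeries.X : PowerSeries k) ^ (n r) :=
  stmt11_general p k r φ hφX ψ hψφ hψ0 n hn
end

section
/- Let W be a finite group equipped with a distinguished element ū, an involution s_d, a subset W^{s_d} ⊆ W, and a map σ: W^{s_d} → {-1,0,1}. For a subset W' ⊆ W define the map (.)_+^{W'}: W → W by the five-case formula of the paper: w ↦ wū⁻¹ or w ↦ wū⁻¹s_d according to the values of σ at wū⁻¹ and wū⁻¹s_d and membership of wū⁻¹s_dū in W'. Then there exists a σ-admissible filtration ∅ = W_0 ⊂ W_1 ⊂ … ⊂ W_q = W: i.e., for each 1 ≤ i ≤ q the map (.)_+^{W_{i-1}} maps W ∖ W_{i-1} into itself and restricts to a permutation of W_i ∖ W_{i-1}. -/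
/-- The map `w ↦ w₊^{W'}` attached to `σ : W^{s_d} → {-1,0,1}` and a subset `W' ⊆ W`. -/
noncomputable def plusMap {W : Type*} [Group W] (ubar sd : W) (Wsd : Set W) (σ : W → ℤ)
    (W' : Set W) (w : W) : W :=
  open Classical in
  if ((w * ubar⁻¹ ∈ Wsd ∧ σ (w * ubar⁻¹) = 0)
        ∨ (w * ubar⁻¹ * sd ∈ Wsd ∧ σ (w * ubar⁻¹ * sd) = 0))
      ∨ (((w * ubar⁻¹ ∈ Wsd ∧ σ (w * ubar⁻¹) = -1)
            ∨ (w * ubar⁻¹ * sd ∈ Wsd ∧ σ (w * ubar⁻¹ * sd) = 1))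
          ∧ w * ubar⁻¹ * sd * ubar ∉ W')
      ∨ (((w * ubar⁻¹ ∈ Wsd ∧ σ (w * ubar⁻¹) = 1)
            ∨ (w * ubar⁻¹ * sd ∈ Wsd ∧ σ (w * ubar⁻¹ * sd) = -1))
          ∧ w * ubar⁻¹ * sd * ubar ∈ W')
  then w * ubar⁻¹
  else w * ubar⁻¹ * sd

namespace PlusMapAux

variable {W : Type*} [Group W]

/-- Admissibility of a set `W'`: every element is hit, from within `W'`, by a plus map
attached to a subset of `W'`. -/
def Adm (ubar sd : W) (Wsd : Set W) (σ : W → ℤ) (W' : Set W) : Prop :=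
  ∀ x ∈ W', ∃ V y, V ⊆ W' ∧ y ∈ W' ∧ plusMap ubar sd Wsd σ V y = x

lemma fiber_mem (ubar sd : W) (Wsd : Set W) (σ : W → ℤ) (hsd : sd * sd = 1)
    (V : Set W) (w x : W) (h : plusMap ubar sd Wsd σ V w = x) :
    w = x * ubar ∨ w = x * sd * ubar := by
  unfold plusMap at h
  split_ifs at h
  · left; rw [← h, inv_mul_cancel_right]
  · right; rw [← h, mul_assoc (w * ubar⁻¹) sd sd, hsd, mul_one, inv_mul_cancel_right]

lemma crux (ubar sd : W) (Wsd : Set W) (σ : W → ℤ) (hsd : sd * sd = 1) (hne : sd ≠ 1)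
    (V₁ V₂ : Set W) (x : W)
    (h1 : plusMap ubar sd Wsd σ V₁ (x * ubar) = x)
    (h2 : plusMap ubar sd Wsd σ V₂ (x * sd * ubar) = x) :
    (x * sd * ubar ∈ V₁ ↔ x * ubar ∈ V₂) := by
  have hne' : x * sd ≠ x := fun h => hne (mul_left_cancel (h.trans (mul_one x).symm))
  have e1 : x * ubar * ubar⁻¹ = x := mul_inv_cancel_right x ubar
  have e2 : x * sd * ubar * ubar⁻¹ = x * sd := mul_inv_cancel_right _ ubar
  have e3 : x * sd * sd = x := by rw [mul_assoc, hsd, mul_one]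
  unfold plusMap at h1 h2
  rw [e1] at h1
  rw [e2, e3] at h2
  split_ifs at h1 h2 with hP1 hP2 hP2
  · exact absurd h2 hne'
  · tauto
  · exact absurd h1 hne'
  · exact absurd h1 hne'

lemma mapsTo_compl (ubar sd : W) (Wsd : Set W) (σ : W → ℤ) (hsd : sd * sd = 1) (hne : sd ≠ 1)
    (W' : Set W) (hadm : Adm ubar sd Wsd σ W') :
    Set.MapsTo (plusMap ubar sd Wsd σ W') W'ᶜ W'ᶜ := by
  intro w hw
  by_contra hx
  rw [Set.mem_compl_iff, not_not] at hx
  obtain ⟨V, y, hVW, hyW, hy⟩ := hadm _ hx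
  set x := plusMap ubar sd Wsd σ W' w with hxdef
  have hw' := fiber_mem ubar sd Wsd σ hsd W' w x rfl
  have hy' := fiber_mem ubar sd Wsd σ hsd V y x hy
  rcases hw' with h1 | h1 <;> rcases hy' with h2 | h2
  · exact hw (by rw [h1, ← h2]; exact hyW)
  · -- w = x*ubar, y = x*sd*ubar
    have hA : plusMap ubar sd Wsd σ W' (x * ubar) = x := by rw [← h1]
    have hB : plusMap ubar sd Wsd σ V (x * sd * ubar) = x := by rw [← h2]; exact hy
    have hc := crux ubar sd Wsd σ hsd hne W' V x hA hB
    have : x * sd * ubar ∈ W' := by rw [← h2]; exact hyW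
    exact hw (by rw [h1]; exact hVW (hc.mp this))
  · -- w = x*sd*ubar, y = x*ubar
    have hA : plusMap ubar sd Wsd σ V (x * ubar) = x := by rw [← h2]; exact hy
    have hB : plusMap ubar sd Wsd σ W' (x * sd * ubar) = x := by rw [← h1]
    have hc := crux ubar sd Wsd σ hsd hne V W' x hA hB
    have : x * ubar ∈ W' := by rw [← h2]; exact hyW
    exact hw (by rw [h1]; exact hVW (hc.mpr this))
  · exact hw (by rw [h1, ← h2]; exact hyW)

lemma exists_bijOn {α : Type*} [Finite α] (f : α → α) (C : Set α) (hC : C.Nonempty)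
    (hf : Set.MapsTo f C C) :
    ∃ E : Set α, E.Nonempty ∧ E ⊆ C ∧ Set.BijOn f E E := by
  refine ⟨C ∩ Function.periodicPts f, ?_, Set.inter_subset_left, ?_, ?_, ?_⟩
  · obtain ⟨c, hc⟩ := hC
    have : ∃ a b, a < b ∧ f^[a] c = f^[b] c := by
      obtain ⟨a, b, hab, heq⟩ := Finite.exists_ne_map_eq_of_infinite fun n : ℕ => f^[n] c
      rcases hab.lt_or_gt with h | h
      exacts [⟨a, b, h, heq⟩, ⟨b, a, h, heq.symm⟩]
    obtain ⟨a, b, hab, heq⟩ := this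
    refine ⟨f^[a] c, hf.iterate a hc, Function.mem_periodicPts.mpr ⟨b - a, by omega, ?_⟩⟩
    show f^[b - a] (f^[a] c) = f^[a] c
    rw [← Function.iterate_add_apply, Nat.sub_add_cancel hab.le]
    exact heq.symm
  · rintro z ⟨hzC, hzP⟩
    exact ⟨hf hzC, (Function.bijOn_periodicPts f).mapsTo hzP⟩
  · exact (Function.bijOn_periodicPts f).injOn.mono Set.inter_subset_right
  · rintro z ⟨hzC, hzP⟩
    obtain ⟨n, hn, hper⟩ := Function.mem_periodicPts.mp hzP
    refine ⟨f^[n - 1] z, ⟨hf.iterate (n - 1) hzC,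
      Function.mem_periodicPts.mpr ⟨n, hn, hper.apply_iterate (n - 1)⟩⟩, ?_⟩
    show f (f^[n - 1] z) = z
    rw [← Function.iterate_succ_apply' f (n - 1) z, Nat.succ_eq_add_one,
      Nat.sub_add_cancel hn]
    exact hper

lemma step [Fintype W] (ubar sd : W) (Wsd : Set W) (σ : W → ℤ)
    (hsd : sd * sd = 1) (hne : sd ≠ 1) :
    ∀ (n : ℕ) (W' : Set W), Adm ubar sd Wsd σ W' → (W'ᶜ).ncard ≤ n →
    ∃ (q : ℕ) (F : ℕ → Set W), F 0 = W' ∧ F q = Set.univ ∧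
      (∀ i < q, F i ⊆ F (i + 1)) ∧
      ∀ i, 1 ≤ i → i ≤ q →
        Set.MapsTo (plusMap ubar sd Wsd σ (F (i - 1))) (F (i - 1))ᶜ (F (i - 1))ᶜ ∧
        Set.BijOn (plusMap ubar sd Wsd σ (F (i - 1)))
          (F i \ F (i - 1)) (F i \ F (i - 1)) := by
  intro n
  induction n with
  | zero =>
    intro W' hadm hcard
    by_cases hU : W' = Set.univ
    · exact ⟨0, fun _ => W', rfl, hU, by omega, by omega⟩
    · exfalso
      have hCne : (W'ᶜ).Nonempty := Set.nonempty_compl.mpr hU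
      have := (Set.ncard_pos (Set.toFinite _)).mpr hCne
      omega
  | succ m ih =>
    intro W' hadm hcard
    by_cases hU : W' = Set.univ
    · exact ⟨0, fun _ => W', rfl, hU, by omega, by omega⟩
    · have hCne : (W'ᶜ).Nonempty := Set.nonempty_compl.mpr hU
      have hmaps := mapsTo_compl ubar sd Wsd σ hsd hne W' hadm
      obtain ⟨E, hEne, hEC, hbij⟩ := exists_bijOn (plusMap ubar sd Wsd σ W') W'ᶜ hCne hmaps
      set W'' := W' ∪ E with hW''
      have hsub : W' ⊆ W'' := Set.subset_union_left
      have hadm'' : Adm ubar sd Wsd σ W'' := by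
        intro x hx
        rcases hx with hx | hx
        · obtain ⟨V, y, hV, hy, he⟩ := hadm x hx
          exact ⟨V, y, hV.trans hsub, hsub hy, he⟩
        · obtain ⟨y, hyE, hyx⟩ := hbij.surjOn hx
          exact ⟨W', y, hsub, Or.inr hyE, hyx⟩
      have hdiff : W'' \ W' = E := by
        rw [hW'', Set.union_diff_left]
        ext z
        simp only [Set.mem_diff]
        exact ⟨fun h => h.1, fun h => ⟨h, hEC h⟩⟩
      have hcard'' : (W''ᶜ).ncard ≤ m := by
        have hss : W''ᶜ ⊂ W'ᶜ := by
          constructor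
          · exact Set.compl_subset_compl.mpr hsub
          · intro hcontra
            obtain ⟨e, he⟩ := hEne
            exact (hcontra (hEC he)) (Or.inr he)
        have := Set.ncard_lt_ncard hss (Set.toFinite _)
        omega
      obtain ⟨q', F', hF0, hFq, hmono, hmain⟩ := ih W'' hadm'' hcard''
      refine ⟨q' + 1, fun i => match i with | 0 => W' | j + 1 => F' j, rfl, hFq, ?_, ?_⟩
      · intro i hi
        match i with
        | 0 =>
          show W' ⊆ F' 0
          rw [hF0]; exact hsub
        | j + 1 =>
          exact hmono j (by omega)
      · intro i h1 h2
        rcases Nat.lt_or_ge i 2 with hi2 | hi2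
        · have hi1 : i = 1 := by omega
          subst hi1
          show Set.MapsTo (plusMap ubar sd Wsd σ W') W'ᶜ W'ᶜ ∧
            Set.BijOn (plusMap ubar sd Wsd σ W') (F' 0 \ W') (F' 0 \ W')
          rw [hF0, hdiff]
          exact ⟨hmaps, hbij⟩
        · obtain ⟨j, rfl⟩ := Nat.exists_eq_add_of_le' hi2
          exact hmain (j + 1) (by omega) (by omega)
end PlusMapAux

/-- σ-admissible filtrations exist: there is a filtration `∅ = W_0 ⊆ W_1 ⊆ … ⊆ W_q = W`
such that for each `i` the map `(.)₊^{W_{i-1}}` preserves `W ∖ W_{i-1}` and restricts to a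
permutation of `W_i ∖ W_{i-1}`. -/
theorem stmt18 {W : Type*} [Group W] [Fintype W] (ubar sd : W) (Wsd : Set W) (σ : W → ℤ)
    (hsd : sd * sd = 1)
    (hpart : ∀ w : W, w ∈ Wsd ↔ w * sd ∉ Wsd)
    (hσ : ∀ w ∈ Wsd, σ w = -1 ∨ σ w = 0 ∨ σ w = 1) :
    ∃ (q : ℕ) (F : ℕ → Set W), F 0 = ∅ ∧ F q = Set.univ ∧
      (∀ i < q, F i ⊆ F (i + 1)) ∧
      ∀ i, 1 ≤ i → i ≤ q →
        Set.MapsTo (plusMap ubar sd Wsd σ (F (i - 1))) (F (i - 1))ᶜ (F (i - 1))ᶜ ∧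
        Set.BijOn (plusMap ubar sd Wsd σ (F (i - 1)))
          (F i \ F (i - 1)) (F i \ F (i - 1)) := by
  have hne : sd ≠ 1 := by
    intro h
    have := hpart 1
    rw [h, mul_one] at this
    tauto
  have hadm : PlusMapAux.Adm ubar sd Wsd σ (∅ : Set W) :=
    fun x hx => absurd hx (Set.notMem_empty x)
  obtain ⟨q, F, h0, hq, hmono, hmain⟩ :=
    PlusMapAux.step ubar sd Wsd σ hsd hne (Fintype.card W) ∅ hadm
      (by
        have : ((∅ : Set W)ᶜ).ncard ≤ (Set.univ : Set W).ncard :=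
          Set.ncard_le_ncard (Set.subset_univ _) (Set.toFinite _)
        rwa [Set.ncard_univ, Nat.card_eq_fintype_card] at this)
  exact ⟨q, F, h0, hq, hmono, hmain⟩
end
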